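/- arXiv:2107.13333 — 3 statements merged into one kernel-verified Lean document; each statement's English description precedes it below -/
import Mathlib

section
/- The function g(x,y) = x*y/(x+y-U*y), for a fixed constant U with 0 < U ≤ 1, is concave on the domain {(x,y) : 0 < x ≤ U, 0 < y ≤ 1}. Specifically, its Hessian equals (2(1-U)/(x+y-U*y)^3) * [[-y^2, xy],[xy, -x^2]], which is negative semidefinite on this domain. -/
open Matrix Set Topology

/-!
Write `D(x, y) = x + (1 - U) y`, which is positive once `x > 0`, `y ≥ 0` and `U ≤ 1`. For `a + b = 1`,
`g(a p + b q) - (a g(p) + b g(q)) = (1 - U) a b (x₁ y₂ - x₂ y₁)² / (D(p) D(q) D(a p + b q))`,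
so `g` is concave on the whole quadrant `x > 0, y ≥ 0`. The Hessian is `-2(1 - U)/D³` times the
outer product of `(y, -x)` with itself, so its quadratic form is `-2(1 - U)(y v₀ - x v₁)²/D³`.
-/

lemma denom_pos {U x y : ℝ} (hU : U ≤ 1) (hx : 0 < x) (hy : 0 ≤ y) : 0 < x + y - U * y := by
  nlinarith

theorem concaveOn_mul_div_add_sub_mul {U : ℝ} (hU : U ≤ 1) :
    ConcaveOn ℝ (Ioi 0 ×ˢ Ici 0) (fun p : ℝ × ℝ => p.1 * p.2 / (p.1 + p.2 - U * p.2)) := by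
  refine ⟨(convex_Ioi 0).prod (convex_Ici 0), ?_⟩
  rintro ⟨x₁, y₁⟩ ⟨hx₁, hy₁⟩ ⟨x₂, y₂⟩ ⟨hx₂, hy₂⟩ a b ha hb hab
  have hx : 0 < a * x₁ + b * x₂ := convex_Ioi (0 : ℝ) hx₁ hx₂ ha hb hab
  have hy : 0 ≤ a * y₁ + b * y₂ := convex_Ici (0 : ℝ) hy₁ hy₂ ha hb hab
  simp only [mem_Ioi, mem_Ici] at hx₁ hy₁ hx₂ hy₂
  simp only [Prod.smul_mk, Prod.mk_add_mk, smul_eq_mul]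
  have hD₁ := denom_pos hU hx₁ hy₁
  have hD₂ := denom_pos hU hx₂ hy₂
  have hD := denom_pos hU hx hy
  set D₁ := x₁ + y₁ - U * y₁ with hD₁_def
  set D₂ := x₂ + y₂ - U * y₂ with hD₂_def
  set D := a * x₁ + b * x₂ + (a * y₁ + b * y₂) - U * (a * y₁ + b * y₂) with hD_def
  have key : (a * x₁ + b * x₂) * (a * y₁ + b * y₂) / D - (a * (x₁ * y₁ / D₁) + b * (x₂ * y₂ / D₂))
      = (1 - U) * a * b * (x₁ * y₂ - x₂ * y₁) ^ 2 / (D₁ * D₂ * D) := by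
    obtain rfl : b = 1 - a := by linarith
    field_simp
    rw [hD₁_def, hD₂_def, hD_def]
    ring
  rw [← sub_nonneg, key]
  have hU' : 0 ≤ 1 - U := by linarith
  positivity

lemma HasDerivAt.div_sq {N L : ℝ → ℝ} {n l t : ℝ} (hN : HasDerivAt N n t)
    (hL : HasDerivAt L l t) (h : L t ≠ 0) :
    HasDerivAt (fun s => N s / L s ^ 2) ((n * L t - 2 * N t * l) / L t ^ 3) t :=
  (hN.fun_div (hL.fun_pow 2) (pow_ne_zero 2 h)).congr_deriv (by field_simp; ring)

section Partials

variable {U x y : ℝ}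

lemma hasDerivAt_denom_fst : HasDerivAt (fun x' => x' + y - U * y) 1 x :=
  ((hasDerivAt_id x).add_const y).sub_const (U * y)

lemma hasDerivAt_denom_snd : HasDerivAt (fun y' => x + y' - U * y') (1 - U) y := by
  simpa using ((hasDerivAt_id y).const_add x).fun_sub ((hasDerivAt_id y).const_mul U)

lemma hasDerivAt_partial_fst (hD : x + y - U * y ≠ 0) :
    HasDerivAt (fun x' => x' * y / (x' + y - U * y)) ((1 - U) * y ^ 2 / (x + y - U * y) ^ 2) x :=
  (((hasDerivAt_id x).mul_const y).fun_div hasDerivAt_denom_fst hD).congr_deriv (by simp; ring)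

lemma hasDerivAt_partial_snd (hD : x + y - U * y ≠ 0) :
    HasDerivAt (fun y' => x * y' / (x + y' - U * y')) (x ^ 2 / (x + y - U * y) ^ 2) y :=
  (((hasDerivAt_id y).const_mul x).fun_div hasDerivAt_denom_snd hD).congr_deriv (by simp; ring)

lemma deriv_partial_fst_fst (hD : x + y - U * y ≠ 0) :
    deriv (fun x' => deriv (fun x'' => x'' * y / (x'' + y - U * y)) x') x
      = 2 * (1 - U) / (x + y - U * y) ^ 3 * (-(y ^ 2)) := by
  have hfirst : deriv (fun x'' => x'' * y / (x'' + y - U * y))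
      =ᶠ[𝓝 x] fun x' => (1 - U) * y ^ 2 / (x' + y - U * y) ^ 2 := by
    filter_upwards [hasDerivAt_denom_fst.continuousAt.eventually_ne hD] with x' hx'
    exact (hasDerivAt_partial_fst hx').deriv
  rw [hfirst.deriv_eq,
    ((hasDerivAt_const x _).div_sq hasDerivAt_denom_fst hD).deriv,
    div_mul_eq_mul_div]
  congr 1
  ring

lemma deriv_partial_snd_fst (hD : x + y - U * y ≠ 0) :
    deriv (fun y' => deriv (fun x'' => x'' * y' / (x'' + y' - U * y')) x) y
      = 2 * (1 - U) / (x + y - U * y) ^ 3 * (x * y) := by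
  have hfirst : (fun y' => deriv (fun x'' => x'' * y' / (x'' + y' - U * y')) x)
      =ᶠ[𝓝 y] fun y' => (1 - U) * y' ^ 2 / (x + y' - U * y') ^ 2 := by
    filter_upwards [hasDerivAt_denom_snd.continuousAt.eventually_ne hD] with y' hy'
    exact (hasDerivAt_partial_fst hy').deriv
  rw [hfirst.deriv_eq,
    (((hasDerivAt_pow 2 y).const_mul _).div_sq hasDerivAt_denom_snd hD).deriv,
    div_mul_eq_mul_div]
  congr 1
  ring

lemma deriv_partial_fst_snd (hD : x + y - U * y ≠ 0) :
    deriv (fun x' => deriv (fun y'' => x' * y'' / (x' + y'' - U * y'')) y) x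
      = 2 * (1 - U) / (x + y - U * y) ^ 3 * (x * y) := by
  have hfirst : (fun x' => deriv (fun y'' => x' * y'' / (x' + y'' - U * y'')) y)
      =ᶠ[𝓝 x] fun x' => x' ^ 2 / (x' + y - U * y) ^ 2 := by
    filter_upwards [hasDerivAt_denom_fst.continuousAt.eventually_ne hD] with x' hx'
    exact (hasDerivAt_partial_snd hx').deriv
  rw [hfirst.deriv_eq,
    ((hasDerivAt_pow 2 x).div_sq hasDerivAt_denom_fst hD).deriv,
    div_mul_eq_mul_div]
  congr 1
  ring

lemma deriv_partial_snd_snd (hD : x + y - U * y ≠ 0) :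
    deriv (fun y' => deriv (fun y'' => x * y'' / (x + y'' - U * y'')) y') y
      = 2 * (1 - U) / (x + y - U * y) ^ 3 * (-(x ^ 2)) := by
  have hfirst : deriv (fun y'' => x * y'' / (x + y'' - U * y''))
      =ᶠ[𝓝 y] fun y' => x ^ 2 / (x + y' - U * y') ^ 2 := by
    filter_upwards [hasDerivAt_denom_snd.continuousAt.eventually_ne hD] with y' hy'
    exact (hasDerivAt_partial_snd hy').deriv
  rw [hfirst.deriv_eq,
    ((hasDerivAt_const y _).div_sq hasDerivAt_denom_snd hD).deriv,
    div_mul_eq_mul_div]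
  congr 1
  ring

end Partials

lemma dotProduct_smul_neg_outer_mulVec (k x y : ℝ) (v : Fin 2 → ℝ) :
    v ⬝ᵥ ((k • Matrix.of ![![-(y ^ 2), x * y], ![x * y, -(x ^ 2)]]).mulVec v)
      = -(k * (y * v 0 - x * v 1) ^ 2) := by
  simp [dotProduct, Matrix.mulVec, Fin.sum_univ_two]
  ring

theorem stmt_2_general (U : ℝ) (hU1 : U ≤ 1) :
    ConcaveOn ℝ {p : ℝ × ℝ | 0 < p.1 ∧ p.1 ≤ U ∧ 0 < p.2 ∧ p.2 ≤ 1}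
      (fun p => p.1 * p.2 / (p.1 + p.2 - U * p.2)) ∧
    (∀ x y : ℝ, 0 < x → x ≤ U → 0 < y → y ≤ 1 →
      (deriv (fun x' => deriv (fun x'' => x'' * y / (x'' + y - U * y)) x') x
          = 2 * (1 - U) / (x + y - U * y) ^ 3 * (-(y ^ 2)) ∧
       deriv (fun y' => deriv (fun x'' => x'' * y' / (x'' + y' - U * y')) x) y
          = 2 * (1 - U) / (x + y - U * y) ^ 3 * (x * y) ∧
       deriv (fun x' => deriv (fun y'' => x' * y'' / (x' + y'' - U * y'')) y) x
          = 2 * (1 - U) / (x + y - U * y) ^ 3 * (x * y) ∧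
       deriv (fun y' => deriv (fun y'' => x * y'' / (x + y'' - U * y'')) y') y
          = 2 * (1 - U) / (x + y - U * y) ^ 3 * (-(x ^ 2))) ∧
      ∀ v : Fin 2 → ℝ,
        v ⬝ᵥ (((2 * (1 - U) / (x + y - U * y) ^ 3) •
          Matrix.of ![![-(y ^ 2), x * y], ![x * y, -(x ^ 2)]]).mulVec v) ≤ 0) := by
  have hbox : {p : ℝ × ℝ | 0 < p.1 ∧ p.1 ≤ U ∧ 0 < p.2 ∧ p.2 ≤ 1} = Ioc 0 U ×ˢ Ioc 0 1 := by
    ext p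
    simp [and_assoc]
  refine ⟨(concaveOn_mul_div_add_sub_mul hU1).subset ?_ ?_, fun x y hx _ hy _ => ?_⟩
  · rintro p ⟨hp₁, -, hp₂, -⟩
    exact ⟨hp₁, hp₂.le⟩
  · exact hbox ▸ (convex_Ioc 0 U).prod (convex_Ioc 0 1)
  have hD := denom_pos hU1 hx hy.le
  refine ⟨⟨deriv_partial_fst_fst hD.ne', deriv_partial_snd_fst hD.ne',
    deriv_partial_fst_snd hD.ne', deriv_partial_snd_snd hD.ne'⟩, fun v => ?_⟩
  have hU' : 0 ≤ 1 - U := by linarith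
  rw [dotProduct_smul_neg_outer_mulVec, neg_nonpos]
  positivity

/-- For a fixed `U ∈ (0,1]`, the function `g(x,y) = xy/(x+y-Uy)` is concave on
`{(x,y) : 0 < x ≤ U, 0 < y ≤ 1}`; its second-order partial derivatives form the
Hessian `(2(1-U)/(x+y-Uy)^3) * [[-y², xy],[xy, -x²]]`, which is negative
semidefinite on this domain. -/
theorem stmt_2 (U : ℝ) (hU0 : 0 < U) (hU1 : U ≤ 1) :
    ConcaveOn ℝ {p : ℝ × ℝ | 0 < p.1 ∧ p.1 ≤ U ∧ 0 < p.2 ∧ p.2 ≤ 1}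
      (fun p => p.1 * p.2 / (p.1 + p.2 - U * p.2)) ∧
    (∀ x y : ℝ, 0 < x → x ≤ U → 0 < y → y ≤ 1 →
      (deriv (fun x' => deriv (fun x'' => x'' * y / (x'' + y - U * y)) x') x
          = 2 * (1 - U) / (x + y - U * y) ^ 3 * (-(y ^ 2)) ∧
       deriv (fun y' => deriv (fun x'' => x'' * y' / (x'' + y' - U * y')) x) y
          = 2 * (1 - U) / (x + y - U * y) ^ 3 * (x * y) ∧
       deriv (fun x' => deriv (fun y'' => x' * y'' / (x' + y'' - U * y'')) y) x
          = 2 * (1 - U) / (x + y - U * y) ^ 3 * (x * y) ∧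
       deriv (fun y' => deriv (fun y'' => x * y'' / (x + y'' - U * y'')) y') y
          = 2 * (1 - U) / (x + y - U * y) ^ 3 * (-(x ^ 2))) ∧
      ∀ v : Fin 2 → ℝ,
        v ⬝ᵥ (((2 * (1 - U) / (x + y - U * y) ^ 3) •
          Matrix.of ![![-(y ^ 2), x * y], ![x * y, -(x ^ 2)]]).mulVec v) ≤ 0) :=
  stmt_2_general U hU1
end

section
/- Tangent-plane cut validity: for U_x ∈ (0,1], any point (x*,y*) with x* ∈ (0,U_x], y* > 0, and any (x,y) with x ∈ (0,U_x], y > 0, the concave function g(x,y) = xy/(x+y-U_x·y) satisfies g(x,y) ≤ (y*/(x*+y*-U_x·y*))²·(1-U_x)·x + (x*/(x*+y*-U_x·y*))²·y. -/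
/-!
Writing `c = 1 - Uₓ`, the tangent plane exceeds `g` by exactly
`c (x y* - x* y)² / ((x* + c y*)² (x + c y))`, which is nonnegative as soon as `c ≥ 0`
and `x + c y > 0`.
-/

lemma tangent_plane_sub_div_eq {c x y xs ys : ℝ} (hd : x + c * y ≠ 0) (hds : xs + c * ys ≠ 0) :
    (ys / (xs + c * ys)) ^ 2 * c * x + (xs / (xs + c * ys)) ^ 2 * y - x * y / (x + c * y) =
      c * (x * ys - xs * y) ^ 2 / ((xs + c * ys) ^ 2 * (x + c * y)) := by
  -- with `q` kept opaque, `field_simp` clears `q ^ 2` instead of expanding it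
  set q := xs + c * ys with hq
  field_simp
  rw [hq]
  ring

lemma div_le_tangent_plane {c x y xs ys : ℝ} (hc : 0 ≤ c) (hd : 0 < x + c * y)
    (hds : xs + c * ys ≠ 0) :
    x * y / (x + c * y) ≤ (ys / (xs + c * ys)) ^ 2 * c * x + (xs / (xs + c * ys)) ^ 2 * y := by
  rw [← sub_nonneg, tangent_plane_sub_div_eq hd.ne' hds]
  positivity

theorem stmt_13_general (Ux xs ys x y : ℝ) (hUx1 : Ux ≤ 1)
    (hxs0 : 0 < xs) (hys : 0 < ys)
    (hx0 : 0 < x) (hy : 0 < y) :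
    x * y / (x + y - Ux * y) ≤
      (ys / (xs + ys - Ux * ys)) ^ 2 * (1 - Ux) * x +
      (xs / (xs + ys - Ux * ys)) ^ 2 * y := by
  have hc : 0 ≤ 1 - Ux := sub_nonneg.mpr hUx1
  have hdenom (a b : ℝ) : a + b - Ux * b = a + (1 - Ux) * b := by ring
  simp only [hdenom]
  exact div_le_tangent_plane hc (by positivity) (by positivity)

/-- Tangent-plane cut validity for `g(x,y) = xy/(x+y-Uₓy)`. -/
theorem stmt_13 (Ux xs ys x y : ℝ) (hUx0 : 0 < Ux) (hUx1 : Ux ≤ 1)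
    (hxs0 : 0 < xs) (hxs : xs ≤ Ux) (hys : 0 < ys)
    (hx0 : 0 < x) (hx : x ≤ Ux) (hy : 0 < y) :
    x * y / (x + y - Ux * y) ≤
      (ys / (xs + ys - Ux * ys)) ^ 2 * (1 - Ux) * x +
      (xs / (xs + ys - Ux * ys)) ^ 2 * y :=
  stmt_13_general Ux xs ys x y hUx1 hxs0 hys hx0 hy
end

section
/- Lower-bound tangent cut validity: for constants 0 < L_x ≤ U_x ≤ 1, 0 < L_y ≤ U_y ≤ 1, and all (x,y) ∈ [L_x,U_x] × [L_y,U_y], the function f₃(x,y) = xy/(x+y-xy) satisfies f₃(x,y) ≤ (L_y²/(L_x+L_y-L_x·L_y)²)·(x-L_x) + (U_x²/(U_x+L_y-U_x·L_y)²)·(y-L_y) + L_x·L_y/(L_x+L_y-L_x·L_y). -/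
/-!
Split `f₃(x,y) - f₃(L_x,L_y)` at `(x, L_y)`. Along the `y`-direction the slope `∂f₃/∂y = (x/(x+y-xy))²`
decreases in `y` and increases in `x`, so the increment from `(x, L_y)` to `(x, y)` is at most the slope at
`(U_x, L_y)` times `y - L_y`. Along the `x`-direction `f₃(·, L_y)` is concave, so it lies below its tangent
at `L_x`.
-/

noncomputable def f₃ (x y : ℝ) : ℝ := x * y / (x + y - x * y)

lemma add_sub_mul_pos {x y : ℝ} (hx : 0 ≤ x) (hy : 0 < y) (hy1 : y ≤ 1) : 0 < x + y - x * y := by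
  nlinarith

lemma f₃_sub_f₃ {x y y' : ℝ} (hy : x + y - x * y ≠ 0) (hy' : x + y' - x * y' ≠ 0) :
    f₃ x y - f₃ x y' = x ^ 2 * (y - y') / ((x + y - x * y) * (x + y' - x * y')) := by
  unfold f₃
  field_simp
  ring

lemma div_add_sub_mul_le {x u y : ℝ} (hx : 0 < x) (hxu : x ≤ u) (hu : u ≤ 1) (hy : 0 ≤ y) :
    x / (x + y - x * y) ≤ u / (u + y - u * y) := by
  rw [div_le_div_iff₀ ((add_sub_mul_pos hy hx (hxu.trans hu)).trans_eq (by ring))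
    ((add_sub_mul_pos hy (hx.trans_le hxu) hu).trans_eq (by ring))]
  nlinarith

lemma f₃_sub_f₃_le {x u y y' : ℝ} (hx : 0 < x) (hxu : x ≤ u) (hu : u ≤ 1)
    (hy' : 0 < y') (hy'y : y' ≤ y) (hy : y ≤ 1) :
    f₃ x y - f₃ x y' ≤ u ^ 2 / (u + y' - u * y') ^ 2 * (y - y') := by
  have hD' : 0 < x + y' - x * y' := add_sub_mul_pos hx.le hy' (hy'y.trans hy)
  have hD : x + y' - x * y' ≤ x + y - x * y := by nlinarith
  rw [f₃_sub_f₃ (hD'.trans_le hD).ne' hD'.ne']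
  calc x ^ 2 * (y - y') / ((x + y - x * y) * (x + y' - x * y'))
      ≤ x ^ 2 * (y - y') / ((x + y' - x * y') * (x + y' - x * y')) := by
        gcongr
    _ = (x / (x + y' - x * y')) ^ 2 * (y - y') := by
        field_simp
    _ ≤ (u / (u + y' - u * y')) ^ 2 * (y - y') := by
        gcongr ?_ ^ 2 * _
        exact div_add_sub_mul_le hx hxu hu hy'.le
    _ = u ^ 2 / (u + y' - u * y') ^ 2 * (y - y') := by
        rw [div_pow]

lemma f₃_le_tangent {a x y : ℝ} (ha : 0 ≤ a) (hx : 0 ≤ x) (hy : 0 < y) (hy1 : y ≤ 1) :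
    f₃ x y ≤ y ^ 2 / (a + y - a * y) ^ 2 * (x - a) + f₃ a y := by
  have hDa := add_sub_mul_pos ha hy hy1
  have hDx := add_sub_mul_pos hx hy hy1
  have gap : y ^ 2 / (a + y - a * y) ^ 2 * (x - a) + f₃ a y - f₃ x y
      = y ^ 2 * (1 - y) * (x - a) ^ 2 / ((a + y - a * y) ^ 2 * (x + y - x * y)) := by
    unfold f₃
    rw [div_mul_eq_mul_div, div_add_div _ _ (by positivity) hDa.ne', div_sub_div _ _ (by positivity) hDx.ne',
      div_eq_div_iff (by positivity) (by positivity)]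
    ring
  have gap_nonneg : 0 ≤ y ^ 2 * (1 - y) * (x - a) ^ 2 / ((a + y - a * y) ^ 2 * (x + y - x * y)) := by
    have : 0 ≤ 1 - y := sub_nonneg.2 hy1
    positivity
  linarith

theorem stmt_17_general (Lx Ux Ly Uy x y : ℝ)
    (hLx : 0 < Lx) (hUx : Ux ≤ 1)
    (hLy : 0 < Ly) (hUy : Uy ≤ 1)
    (hxL : Lx ≤ x) (hxU : x ≤ Ux) (hyL : Ly ≤ y) (hyU : y ≤ Uy) :
    x * y / (x + y - x * y) ≤
      (Ly ^ 2 / (Lx + Ly - Lx * Ly) ^ 2) * (x - Lx) +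
      (Ux ^ 2 / (Ux + Ly - Ux * Ly) ^ 2) * (y - Ly) +
      Lx * Ly / (Lx + Ly - Lx * Ly) := by
  have hx : 0 < x := hLx.trans_le hxL
  have hy1 : y ≤ 1 := hyU.trans hUy
  have along_y := f₃_sub_f₃_le hx hxU hUx hLy hyL hy1
  have along_x := f₃_le_tangent hLx.le hx.le hLy (hyL.trans hy1)
  unfold f₃ at along_y along_x
  linarith

/-- Lower-bound tangent cut validity for `f₃(x,y) = xy/(x+y-xy)`. -/
theorem stmt_17 (Lx Ux Ly Uy x y : ℝ)
    (hLx : 0 < Lx) (hLUx : Lx ≤ Ux) (hUx : Ux ≤ 1)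
    (hLy : 0 < Ly) (hLUy : Ly ≤ Uy) (hUy : Uy ≤ 1)
    (hxL : Lx ≤ x) (hxU : x ≤ Ux) (hyL : Ly ≤ y) (hyU : y ≤ Uy) :
    x * y / (x + y - x * y) ≤
      (Ly ^ 2 / (Lx + Ly - Lx * Ly) ^ 2) * (x - Lx) +
      (Ux ^ 2 / (Ux + Ly - Ux * Ly) ^ 2) * (y - Ly) +
      Lx * Ly / (Lx + Ly - Lx * Ly) :=
  stmt_17_general Lx Ux Ly Uy x y hLx hUx hLy hUy hxL hxU hyL hyU
end
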